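/- Explicit formula for the relative entropy of two rebit states: let 0 ≤ r_s < 1, 0 < r_t < 1 and θ_s, θ_t ∈ ℝ. For r ∈ (0,1) set L(r,θ) := (1/2)·log₂((1−r²)/4)·Id₂ + (1/2)·log₂((1+r)/(1−r))·(cos θ · σ₁ + sin θ · σ₂); then exp((log 2)·L(r,θ)) = ρ(r,θ) (so L(r,θ) = log₂ ρ(r,θ)), and the relative entropy R(ρ(r_s,θ_s) ‖ ρ(r_t,θ_t)) := Tr( ρ(r_s,θ_s)·L(r_s,θ_s) − ρ(r_s,θ_s)·L(r_t,θ_t) ) equals (1/2)log₂(1−r_s²) + (r_s/2)log₂((1+r_s)/(1−r_s)) − (1/2)log₂(1−r_t²) − (r_s cos(θ_s−θ_t)/2)·log₂((1+r_t)/(1−r_t)). (For r_s = 0 take L(0,θ) := −Id₂.) -/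

import Mathlib

/-!
With `n(θ) = cos θ • σ₁ + sin θ • σ₂`, conjugation by the rotation through `θ / 2` carries `σ₁` to
`n(θ)`, so `((x + y) / 2) • 1 + ((x - y) / 2) • n(θ)` is diagonalised with eigenvalues `x, y` and
its exponential is the same combination of `exp x, exp y`. Since `ρ(r,θ) = ½ • 1 + (r / 2) • n(θ)`
has eigenvalues `(1 ± r) / 2`, taking `x, y = log ((1 ± r) / 2)` gives `(log 2) • L(r,θ)`. The trace
formula then only needs `Tr n(θ) = 0` and `Tr (n(θ) * n(φ)) = 2 cos (θ - φ)`.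
-/

/-- The density matrix `ρ(r,θ)`. -/
noncomputable def rho (r θ : ℝ) : Matrix (Fin 2) (Fin 2) ℝ :=
  (1 / 2 : ℝ) •
    !![1 + r * Real.cos θ, r * Real.sin θ; r * Real.sin θ, 1 - r * Real.cos θ]

/-- The real Pauli matrix `σ₁`. -/
def sigma1 : Matrix (Fin 2) (Fin 2) ℝ := !![1, 0; 0, -1]

/-- The real Pauli matrix `σ₂`. -/
def sigma2 : Matrix (Fin 2) (Fin 2) ℝ := !![0, 1; 1, 0]

/-- `L(r,θ) = log₂ ρ(r,θ)` written explicitly; for `r = 0` this gives `−Id₂`. -/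
noncomputable def Lmat (r θ : ℝ) : Matrix (Fin 2) (Fin 2) ℝ :=
  ((1 / 2) * Real.logb 2 ((1 - r ^ 2) / 4)) • (1 : Matrix (Fin 2) (Fin 2) ℝ) +
    ((1 / 2) * Real.logb 2 ((1 + r) / (1 - r))) •
      (Real.cos θ • sigma1 + Real.sin θ • sigma2)

open Matrix Real

noncomputable def rotationMatrix (φ : ℝ) : Matrix (Fin 2) (Fin 2) ℝ :=
  !![cos φ, -sin φ; sin φ, cos φ]

noncomputable def pauliAxis (θ : ℝ) : Matrix (Fin 2) (Fin 2) ℝ :=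
  cos θ • sigma1 + sin θ • sigma2

lemma pauliAxis_eq (θ : ℝ) : pauliAxis θ = !![cos θ, sin θ; sin θ, -cos θ] := by
  simp [pauliAxis, sigma1, sigma2]

lemma rotationMatrix_mul_rotationMatrix_neg (φ : ℝ) :
    rotationMatrix φ * rotationMatrix (-φ) = 1 := by
  rw [rotationMatrix, rotationMatrix, mul_fin_two, one_fin_two, cos_neg, sin_neg]
  ext i j
  fin_cases i <;> fin_cases j <;>
    simp only [Fin.zero_eta, Fin.mk_one, Fin.isValue, of_apply, cons_val', cons_val_zero,
      cons_val_one, cons_val_fin_one]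
  · linear_combination sin_sq_add_cos_sq φ
  · ring
  · ring
  · linear_combination sin_sq_add_cos_sq φ

lemma rotationMatrix_inv (φ : ℝ) : (rotationMatrix φ)⁻¹ = rotationMatrix (-φ) :=
  inv_eq_right_inv (rotationMatrix_mul_rotationMatrix_neg φ)

lemma isUnit_rotationMatrix (φ : ℝ) : IsUnit (rotationMatrix φ) :=
  IsUnit.of_mul_eq_one _ (rotationMatrix_mul_rotationMatrix_neg φ)

lemma smul_one_add_smul_pauliAxis_eq_conj_diagonal (x y φ : ℝ) :
    ((x + y) / 2) • (1 : Matrix (Fin 2) (Fin 2) ℝ) + ((x - y) / 2) • pauliAxis (2 * φ) =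
      rotationMatrix φ * diagonal ![x, y] * (rotationMatrix φ)⁻¹ := by
  rw [rotationMatrix_inv, diagonal_vec2, pauliAxis_eq, rotationMatrix, rotationMatrix, one_fin_two,
    mul_fin_two, mul_fin_two, cos_neg, sin_neg, cos_two_mul, sin_two_mul]
  ext i j
  fin_cases i <;> fin_cases j <;>
    simp only [Fin.zero_eta, Fin.mk_one, Fin.isValue, of_apply, cons_val', cons_val_zero,
      cons_val_one, cons_val_fin_one, Matrix.add_apply, Matrix.smul_apply, smul_eq_mul]
  · linear_combination (-y) * sin_sq_add_cos_sq φ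
  · ring
  · ring
  · linear_combination (-x) * sin_sq_add_cos_sq φ

lemma exp_smul_one_add_smul_pauliAxis (x y θ : ℝ) :
    NormedSpace.exp (((x + y) / 2) • (1 : Matrix (Fin 2) (Fin 2) ℝ) + ((x - y) / 2) • pauliAxis θ) =
      ((rexp x + rexp y) / 2) • (1 : Matrix (Fin 2) (Fin 2) ℝ) +
        ((rexp x - rexp y) / 2) • pauliAxis θ := by
  obtain ⟨φ, rfl⟩ : ∃ φ, θ = 2 * φ := ⟨θ / 2, by ring⟩
  rw [smul_one_add_smul_pauliAxis_eq_conj_diagonal, smul_one_add_smul_pauliAxis_eq_conj_diagonal,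
    exp_conj _ _ (isUnit_rotationMatrix φ), exp_diagonal]
  congr 3
  ext i
  fin_cases i <;> simp [Real.exp_eq_exp_ℝ]

lemma rho_eq_smul_one_add_smul_pauliAxis (r θ : ℝ) :
    rho r θ = (1 / 2 : ℝ) • (1 : Matrix (Fin 2) (Fin 2) ℝ) + (r / 2) • pauliAxis θ := by
  rw [rho, pauliAxis_eq, one_fin_two]
  ext i j
  fin_cases i <;> fin_cases j <;>
    simp only [Fin.zero_eta, Fin.mk_one, Fin.isValue, of_apply, cons_val', cons_val_zero,
      cons_val_one, cons_val_fin_one, Matrix.add_apply, Matrix.smul_apply, smul_eq_mul] <;> ring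

lemma trace_smul_one_add_smul_pauliAxis_mul (p q a b θ φ : ℝ) :
    ((p • (1 : Matrix (Fin 2) (Fin 2) ℝ) + q • pauliAxis θ) *
      (a • (1 : Matrix (Fin 2) (Fin 2) ℝ) + b • pauliAxis φ)).trace =
      2 * (p * a + q * b * cos (θ - φ)) := by
  rw [pauliAxis_eq, pauliAxis_eq, one_fin_two]
  simp only [smul_of, smul_cons, smul_empty, of_add_of, add_cons, head_cons, tail_cons,
    empty_add_empty, mul_fin_two, trace_fin_two_of, smul_eq_mul, cos_sub]
  ring

lemma trace_rho_mul_Lmat (r θ r' θ' : ℝ) :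
    (rho r θ * Lmat r' θ').trace =
      (1 / 2) * logb 2 ((1 - r' ^ 2) / 4) + (r / 2) * cos (θ - θ') * logb 2 ((1 + r') / (1 - r')) := by
  rw [rho_eq_smul_one_add_smul_pauliAxis, Lmat, ← pauliAxis, trace_smul_one_add_smul_pauliAxis_mul]
  ring

lemma exp_log_two_smul_Lmat {r : ℝ} (hr₁ : -1 < r) (hr₂ : r < 1) (θ : ℝ) :
    NormedSpace.exp (log 2 • Lmat r θ) = rho r θ := by
  have hplus : 0 < (1 + r) / 2 := by linarith
  have hminus : 0 < (1 - r) / 2 := by linarith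
  have hsum : log 2 * (1 / 2 * logb 2 ((1 - r ^ 2) / 4)) =
      (log ((1 + r) / 2) + log ((1 - r) / 2)) / 2 := by
    rw [← log_mul hplus.ne' hminus.ne', logb]
    field_simp
    ring_nf
  have hdiff : log 2 * (1 / 2 * logb 2 ((1 + r) / (1 - r))) =
      (log ((1 + r) / 2) - log ((1 - r) / 2)) / 2 := by
    rw [← log_div hplus.ne' hminus.ne', logb]
    field_simp
  rw [Lmat, ← pauliAxis, smul_add, smul_smul, smul_smul, hsum, hdiff,
    exp_smul_one_add_smul_pauliAxis, exp_log hplus, exp_log hminus,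
    rho_eq_smul_one_add_smul_pauliAxis]
  congr 2 <;> ring

/-- Explicit formula for the relative entropy of two rebit states: `L(r,θ)` is the
base-2 matrix logarithm of `ρ(r,θ)` (i.e. `exp((log 2)·L(r,θ)) = ρ(r,θ)`), and
`R(ρ(r_s,θ_s)‖ρ(r_t,θ_t)) = Tr(ρ_s L_s − ρ_s L_t)` equals
`(1/2)log₂(1−r_s²) + (r_s/2)log₂((1+r_s)/(1−r_s)) − (1/2)log₂(1−r_t²)
 − (r_s cos(θ_s−θ_t)/2)·log₂((1+r_t)/(1−r_t))`. -/
theorem relativeEntropy_formula (rs rt θs θt : ℝ)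
    (hrs : rs ∈ Set.Ico (0 : ℝ) 1) (hrt : rt ∈ Set.Ioo (0 : ℝ) 1) :
    (∀ r ∈ Set.Ioo (0 : ℝ) 1, ∀ θ : ℝ,
      NormedSpace.exp ((Real.log 2) • Lmat r θ) = rho r θ) ∧
    (rho rs θs * Lmat rs θs - rho rs θs * Lmat rt θt).trace =
      (1 / 2) * Real.logb 2 (1 - rs ^ 2)
        + (rs / 2) * Real.logb 2 ((1 + rs) / (1 - rs))
        - (1 / 2) * Real.logb 2 (1 - rt ^ 2)
        - (rs * Real.cos (θs - θt) / 2) * Real.logb 2 ((1 + rt) / (1 - rt)) := by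
  refine ⟨fun r hr θ => exp_log_two_smul_Lmat (by linarith [hr.1]) hr.2 θ, ?_⟩
  have hs : 1 - rs ^ 2 ≠ 0 := by nlinarith [hrs.1, hrs.2]
  have ht : 1 - rt ^ 2 ≠ 0 := by nlinarith [hrt.1, hrt.2]
  rw [trace_sub, trace_rho_mul_Lmat, trace_rho_mul_Lmat, sub_self, cos_zero,
    logb_div hs four_ne_zero, logb_div ht four_ne_zero]
  ring
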